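/- For a reaction network satisfying Assumptions 1 and 2: (1) the constant monomial 1 has zero coefficient in every iterated total derivative x^{(ℓ)}, ℓ ≥ 1, of every species variable x; (2) for a non-intermediate species X, the only monomials of degree 1 appearing (with nonzero coefficient) in a derivative x^{(ℓ)}, ℓ ≥ 1, are the variables w of intermediate species W that react to X, i.e., exactly the degree-one monomials appearing in ẋ. -/

import Mathlib

/-! Every reaction has a nonconstant source complex, so the rate functions `ẋ` have no constant
term. Hence no Lie derivative has a constant term, and the linear part of `φ̇` is the linear part
of `φ` composed with the Jacobian of the rate functions at `0`. The linear terms of `ẋ` are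
variables of intermediates `U` adjacent to `x`, and by Assumption 1 the only linear term of `u̇`,
for `u` intermediate, is `u` itself. So the coefficient of `w` in `x^{(n+1)}` is
`c_w ^ n` times its coefficient in `ẋ`, where `c_w` is the coefficient of `w` in `ẇ`. -/

open MvPolynomial Finsupp

variable {σ : Type*}

/-- The total (Lie) derivative of a polynomial `φ` associated to the polynomial vector
field `f`: `φ̇ = Σ_x (∂φ/∂x)·f x`. -/
noncomputable def lieD [Fintype σ] (f : σ → MvPolynomial σ ℝ)
    (φ : MvPolynomial σ ℝ) : MvPolynomial σ ℝ :=
  ∑ x : σ, MvPolynomial.pderiv x φ * f x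

/-- Iterated total (Lie) derivative. -/
noncomputable def lieDIter [Fintype σ] (f : σ → MvPolynomial σ ℝ) :
    ℕ → MvPolynomial σ ℝ → MvPolynomial σ ℝ
  | 0, φ => φ
  | n + 1, φ => lieD f (lieDIter f n φ)

/-- Indicator of a species inside a complex, as a real number. -/
def ind [DecidableEq σ] (a x : σ) : ℝ := if a = x then 1 else 0

/-- A chemical reaction network of the structural form of Assumption 1: the connected
components are indexed by `ι`; component `i` is
`Y i + S i 0 ⇄ U i 1 → Y i + S i 1 ⇄ U i 2 → ⋯ ⇄ U i (L i) → Y i + S i (L i)`,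
with rate constants `a_{i,j}, b_{i,j}, c_{i,j}` for the reactions
`Y i + S i (j-1) → U i j`, `U i j → Y i + S i (j-1)`, `U i j → Y i + S i j`
(`1 ≤ j ≤ L i`). Only the values `S i j` for `j ≤ L i` and `U i j` for
`1 ≤ j ≤ L i` are relevant. -/
structure A1Network (σ : Type*) where
  ι : Type
  [fintypeι : Fintype ι]
  L : ι → ℕ
  Lpos : ∀ i, 1 ≤ L i
  Y : ι → σ
  S : ι → ℕ → σ
  U : ι → ℕ → σ

attribute [instance] A1Network.fintypeι

namespace A1Network

variable [Fintype σ] [DecidableEq σ]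

/-- Rate-constant index: component `i`, block `j+1` (for `j : Fin (L i)`), and
`0, 1, 2` for the constants `a, b, c` of the block. -/
def Param (N : A1Network σ) : Type := (i : N.ι) × Fin (N.L i) × Fin 3

instance (N : A1Network σ) : Fintype N.Param :=
  inferInstanceAs (Fintype ((i : N.ι) × Fin (N.L i) × Fin 3))

/-- `x` is an intermediate species of the network. -/
def inter (N : A1Network σ) (x : σ) : Prop :=
  ∃ i, ∃ j : Fin (N.L i), x = N.U i ((j : ℕ) + 1)

/-- The non-intermediate `x₁` reacts with the non-intermediate `x₂`
(a reaction `x₁ + x₂ → U` exists). -/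
def reactsWith (N : A1Network σ) (x₁ x₂ : σ) : Prop :=
  ∃ i, ∃ j : Fin (N.L i),
    (x₁ = N.Y i ∧ x₂ = N.S i (j : ℕ)) ∨ (x₂ = N.Y i ∧ x₁ = N.S i (j : ℕ))

/-- The intermediate `u` reacts to the non-intermediate `x`
(a reaction `u → x + X₂` exists). -/
def reactsTo (N : A1Network σ) (u x : σ) : Prop :=
  ∃ i, ∃ j : Fin (N.L i), u = N.U i ((j : ℕ) + 1) ∧
    (x = N.Y i ∨ x = N.S i (j : ℕ) ∨ x = N.S i ((j : ℕ) + 1))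

/-- The distinctness/uniqueness requirements of Assumption 1: the intermediates of the
entire network are pairwise distinct and distinct from all non-intermediates; the
non-intermediates of one component are pairwise distinct; each complex lies in a
unique connected component. -/
structure Assumption1 (N : A1Network σ) : Prop where
  U_inj : ∀ i (j : Fin (N.L i)) i' (j' : Fin (N.L i')),
    N.U i ((j : ℕ) + 1) = N.U i' ((j' : ℕ) + 1) → i = i' ∧ (j : ℕ) = (j' : ℕ)
  U_ne_Y : ∀ i (j : Fin (N.L i)) i', N.U i ((j : ℕ) + 1) ≠ N.Y i'
  U_ne_S : ∀ i (j : Fin (N.L i)) i' j', j' ≤ N.L i' → N.U i ((j : ℕ) + 1) ≠ N.S i' j'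
  S_inj : ∀ i j j', j ≤ N.L i → j' ≤ N.L i → N.S i j = N.S i j' → j = j'
  complex_unique : ∀ i i' j j', j ≤ N.L i → j' ≤ N.L i' →
    (∀ x : σ, ind (N.Y i) x + ind (N.S i j) x = ind (N.Y i') x + ind (N.S i' j') x) →
    i = i'

/-- `part` is a partition of the species as in Assumption 2: intermediates form class `0`;
all the substrates and products of a component lie in one class `α ≥ 1` which contains
neither the enzyme of the component nor any intermediate. -/
def IsPartition (N : A1Network σ) (part : σ → ℕ) : Prop :=
  (∀ x, N.inter x → part x = 0) ∧
  (∀ i : N.ι, ∃ α, 1 ≤ α ∧ (∀ j, j ≤ N.L i → part (N.S i j) = α) ∧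
    part (N.Y i) ≠ α ∧ part (N.Y i) ≠ 0)

/-- Assumption 2: there exists a partition as above. -/
def Assumption2 (N : A1Network σ) : Prop := ∃ part, N.IsPartition part

/-- The mass-action right-hand side of the induced dynamical system:
`ẋ = Σ_{y→y'} k_{yy'} x^y (y'-y)`. -/
noncomputable def rhs (N : A1Network σ) (k : N.Param → ℝ) (x : σ) : MvPolynomial σ ℝ :=
  ∑ i : N.ι, ∑ j : Fin (N.L i),
    (C (k ⟨i, j, 0⟩ *
          (ind (N.U i ((j : ℕ) + 1)) x - ind (N.Y i) x - ind (N.S i (j : ℕ)) x)) *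
        (X (N.Y i) * X (N.S i (j : ℕ)))
      + C (k ⟨i, j, 1⟩ *
          (ind (N.Y i) x + ind (N.S i (j : ℕ)) x - ind (N.U i ((j : ℕ) + 1)) x)) *
        X (N.U i ((j : ℕ) + 1))
      + C (k ⟨i, j, 2⟩ *
          (ind (N.Y i) x + ind (N.S i ((j : ℕ) + 1)) x - ind (N.U i ((j : ℕ) + 1)) x)) *
        X (N.U i ((j : ℕ) + 1)))

/-- `x^{(ℓ)}(x, k)`: the `ℓ`-th iterated total derivative of the variable `x`. -/
noncomputable def deriv (N : A1Network σ) (k : N.Param → ℝ) (ℓ : ℕ) (x : σ) :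
    MvPolynomial σ ℝ :=
  lieDIter (N.rhs k) ℓ (X x)

/-- The map `ψ` on rate constants is identifiable from the set of variables `T` with `D`
derivatives: whenever two positive rate vectors give the same derivatives
`x^{(ℓ)}`, `1 ≤ ℓ ≤ D`, `x ∈ T`, as polynomials, the values of `ψ` agree. -/
def IdentifiableFrom {α : Type*} (N : A1Network σ) (ψ : (N.Param → ℝ) → α)
    (T : Set σ) (D : ℕ) : Prop :=
  ∀ k₁ k₂ : N.Param → ℝ, (∀ r, 0 < k₁ r) → (∀ r, 0 < k₂ r) →
    (∀ x ∈ T, ∀ ℓ, 1 ≤ ℓ → ℓ ≤ D → N.deriv k₁ ℓ x = N.deriv k₂ ℓ x) →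
    ψ k₁ = ψ k₂

end A1Network

section LieDerivative

variable {R : Type*} [CommSemiring R]

theorem MvPolynomial.coeff_single_one_mul [DecidableEq σ] (w : σ) (p q : MvPolynomial σ R) :
    coeff (single w 1) (p * q) =
      coeff 0 p * coeff (single w 1) q + coeff (single w 1) p * coeff 0 q := by
  rw [coeff_mul, Finsupp.antidiagonal_single,
    show Finset.HasAntidiagonal.antidiagonal (1 : ℕ) = {(0, 1), (1, 0)} from rfl]
  simp

theorem MvPolynomial.coeff_single_one_X_mul_X [DecidableEq σ] (w a b : σ) :
    coeff (single w 1) ((X a : MvPolynomial σ R) * X b) = 0 := by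
  simp [coeff_single_one_mul, coeff_X, Finsupp.single_eq_zero]

variable [Fintype σ]

theorem constantCoeff_lieD {f : σ → MvPolynomial σ ℝ} (hf : ∀ u, constantCoeff (f u) = 0)
    (φ : MvPolynomial σ ℝ) : constantCoeff (lieD f φ) = 0 := by
  simp [lieD, hf]

theorem coeff_single_one_lieD [DecidableEq σ] {f : σ → MvPolynomial σ ℝ}
    (hf : ∀ u, constantCoeff (f u) = 0) (w : σ) (φ : MvPolynomial σ ℝ) :
    coeff (single w 1) (lieD f φ) = ∑ u, coeff (single u 1) φ * coeff (single w 1) (f u) := by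
  have hf₀ : ∀ u, coeff 0 (f u) = 0 := hf
  simp [lieD, coeff_sum, coeff_single_one_mul, hf₀, coeff_pderiv]

theorem lieDIter_one_X [DecidableEq σ] (f : σ → MvPolynomial σ ℝ) (x : σ) :
    lieDIter f 1 (X x) = f x := by
  simp [lieDIter, lieD, pderiv_X, Pi.single_apply]

end LieDerivative

namespace A1Network

section RateFunction

variable [DecidableEq σ] (N : A1Network σ) (k : N.Param → ℝ)

theorem constantCoeff_rhs (x : σ) : constantCoeff (N.rhs k x) = 0 := by
  simp [rhs]

theorem exists_of_coeff_single_one_rhs_ne_zero {x w : σ}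
    (h : coeff (single w 1) (N.rhs k x) ≠ 0) :
    ∃ i, ∃ j : Fin (N.L i), w = N.U i ((j : ℕ) + 1) ∧
      (x = N.Y i ∨ x = N.S i (j : ℕ) ∨ x = N.S i ((j : ℕ) + 1) ∨
        x = N.U i ((j : ℕ) + 1)) := by
  contrapose! h
  simp only [rhs, coeff_sum, coeff_add, coeff_C_mul, coeff_single_one_X_mul_X, coeff_X,
    Finsupp.single_left_inj one_ne_zero]
  refine Finset.sum_eq_zero fun i _ => Finset.sum_eq_zero fun j _ => ?_
  by_cases hUw : N.U i ((j : ℕ) + 1) = w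
  · obtain ⟨hY, hS, hS', hU⟩ := h i j hUw.symm
    simp [ind, Ne.symm hY, Ne.symm hS, Ne.symm hS', Ne.symm hU]
  · simp [hUw]

theorem inter_of_coeff_single_one_rhs_ne_zero {x w : σ}
    (h : coeff (single w 1) (N.rhs k x) ≠ 0) : N.inter w := by
  obtain ⟨i, j, hw, -⟩ := N.exists_of_coeff_single_one_rhs_ne_zero k h
  exact ⟨i, j, hw⟩

theorem eq_of_coeff_single_one_rhs_ne_zero (h1 : N.Assumption1) {u w : σ} (hu : N.inter u)
    (h : coeff (single w 1) (N.rhs k u) ≠ 0) : u = w := by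
  obtain ⟨i, j, hw, hY | hS | hS' | hU⟩ := N.exists_of_coeff_single_one_rhs_ne_zero k h
  all_goals obtain ⟨i', j', rfl⟩ := hu
  · exact absurd hY (h1.U_ne_Y i' j' i)
  · exact absurd hS (h1.U_ne_S i' j' i j j.isLt.le)
  · exact absurd hS' (h1.U_ne_S i' j' i (j + 1) j.isLt)
  · exact hU.trans hw.symm

end RateFunction

variable [Fintype σ] [DecidableEq σ]

section Derivatives

variable (N : A1Network σ) (k : N.Param → ℝ)

theorem deriv_succ (n : ℕ) (x : σ) : N.deriv k (n + 1) x = lieD (N.rhs k) (N.deriv k n x) :=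
  rfl

theorem deriv_one (x : σ) : N.deriv k 1 x = N.rhs k x :=
  lieDIter_one_X _ x

theorem coeff_single_one_deriv_succ (h1 : N.Assumption1) (x w : σ) (n : ℕ) :
    coeff (single w 1) (N.deriv k (n + 1) x) =
      coeff (single w 1) (N.rhs k w) ^ n * coeff (single w 1) (N.rhs k x) := by
  induction n generalizing w with
  | zero => rw [deriv_one, pow_zero, one_mul]
  | succ n ih =>
    rw [deriv_succ, coeff_single_one_lieD (N.constantCoeff_rhs k),
      Finset.sum_eq_single w, ih, pow_succ, mul_right_comm]
    · intro u _ huw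
      rw [ih]
      by_cases hxu : coeff (single u 1) (N.rhs k x) = 0
      · simp [hxu]
      by_cases huw' : coeff (single w 1) (N.rhs k u) = 0
      · simp [huw']
      exact absurd (N.eq_of_coeff_single_one_rhs_ne_zero k h1
        (N.inter_of_coeff_single_one_rhs_ne_zero k hxu) huw') huw
    · simp

end Derivatives

theorem constant_and_linear_monomials_general
    (N : A1Network σ) (h1 : N.Assumption1)
    (k : N.Param → ℝ) :
    (∀ x : σ, ∀ ℓ, 1 ≤ ℓ →
        MvPolynomial.coeff (0 : σ →₀ ℕ) (N.deriv k ℓ x) = 0)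
    ∧ (∀ x : σ, ¬ N.inter x → ∀ ℓ, 1 ≤ ℓ → ∀ w : σ,
        MvPolynomial.coeff (Finsupp.single w 1) (N.deriv k ℓ x) ≠ 0 →
        N.inter w ∧ N.reactsTo w x ∧
          MvPolynomial.coeff (Finsupp.single w 1) (N.deriv k 1 x) ≠ 0) := by
  refine ⟨fun x ℓ hℓ => ?_, fun x hx ℓ hℓ w hw => ?_⟩
  · obtain ⟨n, rfl⟩ := Nat.exists_eq_add_of_le' hℓ
    rw [← constantCoeff_eq, deriv_succ]
    exact constantCoeff_lieD (N.constantCoeff_rhs k) _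
  · obtain ⟨n, rfl⟩ := Nat.exists_eq_add_of_le' hℓ
    rw [N.coeff_single_one_deriv_succ k h1] at hw
    have hxw := right_ne_zero_of_mul hw
    obtain ⟨i, j, hwU, hxc⟩ := N.exists_of_coeff_single_one_rhs_ne_zero k hxw
    have hxU : x ≠ N.U i ((j : ℕ) + 1) := fun h => hx ⟨i, j, h⟩
    exact ⟨⟨i, j, hwU⟩, ⟨i, j, hwU, by tauto⟩, by rwa [deriv_one]⟩

/-- **Lemma.** For a reaction network satisfying Assumptions 1 and 2:
(1) the constant monomial has zero coefficient in every iterated total derivative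
`x^{(ℓ)}`, `ℓ ≥ 1`, of every species variable;
(2) for a non-intermediate species `X`, the only degree-one monomials appearing in a
derivative `x^{(ℓ)}`, `ℓ ≥ 1`, are the variables `w` of intermediate species `W`
reacting to `X`, i.e. exactly the degree-one monomials appearing in `ẋ`. -/
theorem constant_and_linear_monomials
    (N : A1Network σ) (h1 : N.Assumption1) (h2 : N.Assumption2)
    (k : N.Param → ℝ) (hk : ∀ r, 0 < k r) :
    (∀ x : σ, ∀ ℓ, 1 ≤ ℓ →
        MvPolynomial.coeff (0 : σ →₀ ℕ) (N.deriv k ℓ x) = 0)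
    ∧ (∀ x : σ, ¬ N.inter x → ∀ ℓ, 1 ≤ ℓ → ∀ w : σ,
        MvPolynomial.coeff (Finsupp.single w 1) (N.deriv k ℓ x) ≠ 0 →
        N.inter w ∧ N.reactsTo w x ∧
          MvPolynomial.coeff (Finsupp.single w 1) (N.deriv k 1 x) ≠ 0) :=
  constant_and_linear_monomials_general N h1 k

end A1Network
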